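/- arXiv:2511.21765 — 5 statements merged into one kernel-verified Lean document; each statement's English description precedes it below -/
import Mathlib

section
/- If a, b, c are positive reals with a + b + c = 1, then (ab)^(5/4) + (bc)^(5/4) + (ca)^(5/4) ≤ (1/3)·(1/4)^(1/4). -/
lemma aux1 (x y : ℝ) (hx : 0 < x) (hy : 0 < y) (hxy : x + y ≤ 1) :
    (x*y) ^ (5/4 : ℝ) ≤ (x*y) * (1/4 : ℝ) ^ (1/4 : ℝ) := by
  have hxy4 : x*y ≤ 1/4 := by nlinarith [sq_nonneg (x - y)]
  have hpos : 0 < x*y := mul_pos hx hy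
  have h54 : (5/4 : ℝ) = 1 + 1/4 := by norm_num
  rw [h54, Real.rpow_add hpos, Real.rpow_one]
  exact mul_le_mul_of_nonneg_left
    (Real.rpow_le_rpow hpos.le hxy4 (by norm_num)) hpos.le

theorem stmt1 (a b c : ℝ) (ha : 0 < a) (hb : 0 < b) (hc : 0 < c)
    (habc : a + b + c = 1) :
    (a*b) ^ (5/4 : ℝ) + (b*c) ^ (5/4 : ℝ) + (c*a) ^ (5/4 : ℝ)
      ≤ (1/3) * (1/4 : ℝ) ^ (1/4 : ℝ) := by
  have h1 := aux1 a b ha hb (by linarith)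
  have h2 := aux1 b c hb hc (by linarith)
  have h3 := aux1 c a hc ha (by linarith)
  have hsum : a*b + b*c + c*a ≤ 1/3 := by
    nlinarith [sq_nonneg (a-b), sq_nonneg (b-c), sq_nonneg (c-a)]
  have hq : (0:ℝ) < (1/4 : ℝ) ^ (1/4 : ℝ) := Real.rpow_pos_of_pos (by norm_num) _
  nlinarith [hq]
end

section
/- If a, b, c are positive reals with a + b + c = 1, then (ab)^(5/4) + (bc)^(5/4) + (ca)^(5/4) ≤ 1/4. -/
lemma aux_rpow (x : ℝ) (hx : 0 < x) (h : x ≤ 1/4) :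
    x ^ (5/4 : ℝ) ≤ x * (1/4 : ℝ) ^ (1/4 : ℝ) := by
  have hx5 : x ^ (5/4 : ℝ) = x * x ^ (1/4 : ℝ) := by
    rw [show (5/4 : ℝ) = 1 + 1/4 by norm_num, Real.rpow_add hx, Real.rpow_one]
  rw [hx5]
  have := Real.rpow_le_rpow hx.le h (by norm_num : (0:ℝ) ≤ 1/4)
  nlinarith [Real.rpow_nonneg hx.le (1/4 : ℝ)]

theorem stmt2 (a b c : ℝ) (ha : 0 < a) (hb : 0 < b) (hc : 0 < c)
    (habc : a + b + c = 1) :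
    (a*b) ^ (5/4 : ℝ) + (b*c) ^ (5/4 : ℝ) + (c*a) ^ (5/4 : ℝ) ≤ 1/4 := by
  have hab : a * b ≤ 1/4 := by nlinarith [sq_nonneg (a - b), hc.le]
  have hbc : b * c ≤ 1/4 := by nlinarith [sq_nonneg (b - c), ha.le]
  have hca : c * a ≤ 1/4 := by nlinarith [sq_nonneg (c - a), hb.le]
  have h1 := aux_rpow (a*b) (mul_pos ha hb) hab
  have h2 := aux_rpow (b*c) (mul_pos hb hc) hbc
  have h3 := aux_rpow (c*a) (mul_pos hc ha) hca
  have hsum : a*b + b*c + c*a ≤ 1/3 := by nlinarith [sq_nonneg (a-b), sq_nonneg (b-c), sq_nonneg (c-a)]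
  have hy : (1/4 : ℝ) ^ (1/4 : ℝ) ≤ 3/4 := by
    have hpow : ((1/4 : ℝ) ^ (1/4 : ℝ)) ^ (4:ℕ) = 1/4 := by
      rw [← Real.rpow_natCast _ 4, ← Real.rpow_mul (by norm_num)]
      norm_num
    have hnn : (0:ℝ) ≤ (1/4 : ℝ) ^ (1/4 : ℝ) := Real.rpow_nonneg (by norm_num) _
    nlinarith [sq_nonneg (((1/4:ℝ)^(1/4:ℝ))^2 - (3/4)^2), sq_nonneg ((1/4:ℝ)^(1/4:ℝ) - 3/4), sq_nonneg ((1/4:ℝ)^(1/4:ℝ) + 3/4)]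
  have hynn : (0:ℝ) ≤ (1/4 : ℝ) ^ (1/4 : ℝ) := Real.rpow_nonneg (by norm_num) _
  calc (a*b) ^ (5/4 : ℝ) + (b*c) ^ (5/4 : ℝ) + (c*a) ^ (5/4 : ℝ)
      ≤ (a*b + b*c + c*a) * (1/4 : ℝ) ^ (1/4 : ℝ) := by ring_nf; ring_nf at h1 h2 h3; linarith
    _ ≤ 1/4 := by nlinarith
end

section
/- If a, b, c are positive reals with a + b + c = 1 and s is a real with 1 ≤ s, then (ab)^s + (bc)^s + (ca)^s ≤ (1/3)·(1/4)^(s-1). -/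
lemma aux (x s : ℝ) (hx : 0 < x) (hx4 : x ≤ 1/4) (hs : 1 ≤ s) :
    x ^ s ≤ x * (1/4 : ℝ) ^ (s - 1) := by
  have h1 : x ^ s = x * x ^ (s - 1) := by
    rw [show s = 1 + (s-1) by ring, Real.rpow_add hx, Real.rpow_one]
    ring_nf
  rw [h1]
  exact mul_le_mul_of_nonneg_left (Real.rpow_le_rpow hx.le hx4 (by linarith)) hx.le

theorem stmt3 (a b c s : ℝ) (ha : 0 < a) (hb : 0 < b) (hc : 0 < c)
    (habc : a + b + c = 1) (hs : 1 ≤ s) :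
    (a*b) ^ s + (b*c) ^ s + (c*a) ^ s ≤ (1/3) * (1/4 : ℝ) ^ (s - 1) := by
  have hab : a * b ≤ 1/4 := by nlinarith [sq_nonneg (a - b), sq_nonneg c, sq_nonneg (a+b)]
  have hbc : b * c ≤ 1/4 := by nlinarith [sq_nonneg (b - c), sq_nonneg a, sq_nonneg (b+c)]
  have hca : c * a ≤ 1/4 := by nlinarith [sq_nonneg (c - a), sq_nonneg b, sq_nonneg (c+a)]
  have hsum : a*b + b*c + c*a ≤ 1/3 := by nlinarith [sq_nonneg (a-b), sq_nonneg (b-c), sq_nonneg (c-a)]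
  have hp : (0:ℝ) ≤ (1/4 : ℝ) ^ (s - 1) := Real.rpow_nonneg (by norm_num) _
  have h1 := aux (a*b) s (mul_pos ha hb) hab hs
  have h2 := aux (b*c) s (mul_pos hb hc) hbc hs
  have h3 := aux (c*a) s (mul_pos hc ha) hca hs
  calc (a*b) ^ s + (b*c) ^ s + (c*a) ^ s
      ≤ (a*b + b*c + c*a) * (1/4:ℝ) ^ (s-1) := by nlinarith
    _ ≤ (1/3) * (1/4:ℝ) ^ (s-1) := by nlinarith
end

section
/- For N ≥ 2 and real s with 1 ≤ s ≤ 2, ∑_{k=0}^N C(N,k)·k^s ≤ N^(2−s)·(N + N²)^(s−1)·2^(N−s). -/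
lemma lemA (n : ℕ) : ∑ k ∈ Finset.range (n+2), (n+1).choose k * k = (n+1) * 2^n := by
  rw [Finset.sum_range_succ']
  simp only [Nat.mul_zero, Nat.add_zero]
  have h : ∀ i ∈ Finset.range (n+1), (n+1).choose (i+1) * (i+1) = (n+1) * n.choose i :=
    fun i _ => (Nat.add_one_mul_choose_eq n i).symm
  rw [Finset.sum_congr rfl h, ← Finset.mul_sum, Nat.sum_range_choose]

lemma lemB (n : ℕ) : ∑ k ∈ Finset.range (n+3), (n+2).choose k * k^2 = (n+2)*(n+3) * 2^n := by
  rw [Finset.sum_range_succ']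
  simp only [Nat.pow_two, Nat.mul_zero, Nat.zero_mul, Nat.add_zero]
  have h : ∀ i ∈ Finset.range (n+2),
      (n+2).choose (i+1) * ((i+1)*(i+1)) = (n+2) * ((n+1).choose i * i) + (n+2) * (n+1).choose i := by
    intro i _
    have := (Nat.add_one_mul_choose_eq (n+1) i).symm
    calc (n+2).choose (i+1) * ((i+1)*(i+1)) = ((n+2).choose (i+1) * (i+1)) * (i+1) := by ring
    _ = ((n+2) * (n+1).choose i) * (i+1) := by rw [this]
    _ = (n+2) * ((n+1).choose i * i) + (n+2) * (n+1).choose i := by ring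
  rw [Finset.sum_congr rfl h, Finset.sum_add_distrib, ← Finset.mul_sum, ← Finset.mul_sum,
    lemA n, Nat.sum_range_choose]
  ring

lemma lemAreal (N : ℕ) (hN : 2 ≤ N) :
    ∑ k ∈ Finset.range (N+1), (N.choose k : ℝ) * (k : ℝ) = (N : ℝ) * 2 ^ (N - 1 : ℕ) := by
  obtain ⟨m, rfl⟩ : ∃ m, N = m + 2 := ⟨N - 2, by omega⟩
  have := lemA (m + 1)
  have h2 : m + 1 + 2 = m + 2 + 1 := by ring
  rw [h2] at this
  have h' : ((∑ k ∈ Finset.range (m+2+1), (m+2).choose k * k : ℕ) : ℝ)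
      = (((m+2) * 2^(m+1) : ℕ) : ℝ) := by exact_mod_cast this
  push_cast at h'
  have h4 : m + 2 - 1 = m + 1 := rfl
  rw [h4, h']
  push_cast; ring

lemma lemBreal (N : ℕ) (hN : 2 ≤ N) :
    ∑ k ∈ Finset.range (N+1), (N.choose k : ℝ) * (k : ℝ)^2
      = ((N : ℝ) + (N : ℝ)^2) * 2 ^ (N - 2 : ℕ) := by
  obtain ⟨m, rfl⟩ : ∃ m, N = m + 2 := ⟨N - 2, by omega⟩
  have := lemB m
  have : ((∑ k ∈ Finset.range (m+3), (m+2).choose k * k^2 : ℕ) : ℝ)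
      = (((m+2)*(m+3) * 2^m : ℕ) : ℝ) := by exact_mod_cast this
  push_cast at this
  have h3 : m + 2 + 1 = m + 3 := rfl
  have h4 : m + 2 - 2 = m := rfl
  rw [h3, h4]
  rw [this]; push_cast; ring

theorem stmt13 (N : ℕ) (hN : 2 ≤ N) (s : ℝ) (hs1 : 1 ≤ s) (hs2 : s ≤ 2) :
    ∑ k ∈ Finset.range (N + 1), (N.choose k : ℝ) * (k : ℝ) ^ s
      ≤ (N : ℝ) ^ (2 - s) * ((N : ℝ) + (N : ℝ) ^ 2) ^ (s - 1) * (2 : ℝ) ^ ((N : ℝ) - s) := by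
  have hN0 : (0:ℝ) < N := by positivity
  have hNN : (0:ℝ) ≤ (N : ℝ) + (N : ℝ)^2 := by positivity
  have hpow1 : ((2:ℝ) ^ (N - 1 : ℕ)) = (2:ℝ) ^ ((N:ℝ) - 1) := by
    rw [← Real.rpow_natCast (2:ℝ) (N-1)]
    congr 1
    have : ((N - 1 : ℕ) : ℝ) = (N:ℝ) - 1 := by
      have : (1:ℕ) ≤ N := by omega
      push_cast [Nat.cast_sub this]; ring
    rw [this]
  have hpow2 : ((2:ℝ) ^ (N - 2 : ℕ)) = (2:ℝ) ^ ((N:ℝ) - 2) := by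
    rw [← Real.rpow_natCast (2:ℝ) (N-2)]
    congr 1
    have : ((N - 2 : ℕ) : ℝ) = (N:ℝ) - 2 := by
      push_cast [Nat.cast_sub hN]; ring
    rw [this]
  rcases eq_or_lt_of_le hs1 with h1 | h1
  · -- s = 1
    subst h1
    rw [show (2:ℝ) - 1 = 1 by norm_num, show (1:ℝ) - 1 = 0 by norm_num,
      Real.rpow_one, Real.rpow_zero, mul_one]
    simp only [Real.rpow_one]
    rw [lemAreal N hN, hpow1]
  rcases eq_or_lt_of_le hs2 with h2 | h2
  · -- s = 2
    subst h2
    rw [show (2:ℝ) - 2 = 0 by norm_num, show (2:ℝ) - 1 = 1 by norm_num,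
      Real.rpow_zero, Real.rpow_one, one_mul]
    have : ∀ k ∈ Finset.range (N+1), (N.choose k : ℝ) * (k:ℝ) ^ (2:ℝ)
        = (N.choose k : ℝ) * (k:ℝ) ^ (2:ℕ) := by
      intro k _
      rw [← Real.rpow_natCast (k:ℝ) 2]; norm_num
    rw [Finset.sum_congr rfl this, lemBreal N hN, hpow2]
  · -- 1 < s < 2
    set a := 2 - s with ha
    set b := s - 1 with hb
    have ha0 : 0 < a := by rw [ha]; linarith
    have hb0 : 0 < b := by rw [hb]; linarith
    have hab : a + b = 1 := by rw [ha, hb]; ring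
    have hab2 : a + 2 * b = s := by rw [ha, hb]; ring
    have hpq : (1/a).HolderConjugate (1/b) := Real.holderConjugate_one_div ha0 hb0 hab
    have H := Real.inner_le_Lp_mul_Lq (Finset.range (N+1))
        (fun k => ((N.choose k : ℝ) * (k:ℝ)) ^ a)
        (fun k => ((N.choose k : ℝ) * (k:ℝ)^2) ^ b) hpq
    rw [one_div_one_div, one_div_one_div] at H
    have e1 : ∑ k ∈ Finset.range (N+1),
        ((N.choose k : ℝ) * (k:ℝ)) ^ a * ((N.choose k : ℝ) * (k:ℝ)^2) ^ b
        = ∑ k ∈ Finset.range (N+1), (N.choose k : ℝ) * (k:ℝ) ^ s := by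
      refine Finset.sum_congr rfl fun k hk => ?_
      have hC : (0:ℝ) < (N.choose k : ℝ) := by
        exact_mod_cast Nat.choose_pos (Nat.lt_succ_iff.mp (Finset.mem_range.mp hk))
      rcases Nat.eq_zero_or_pos k with rfl | hk0
      · simp [Real.zero_rpow ha0.ne', Real.zero_rpow hb0.ne',
          Real.zero_rpow (show s ≠ 0 by linarith)]
      · have hk0' : (0:ℝ) < (k:ℝ) := by exact_mod_cast hk0
        rw [show ((k:ℝ)^2 : ℝ) = (k:ℝ)^(2:ℝ) by
            rw [← Real.rpow_natCast (k:ℝ) 2]; norm_num]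
        rw [Real.mul_rpow hC.le hk0'.le,
          Real.mul_rpow hC.le (Real.rpow_nonneg hk0'.le _),
          ← Real.rpow_mul hk0'.le, mul_mul_mul_comm,
          ← Real.rpow_add hC, ← Real.rpow_add hk0', hab, Real.rpow_one, hab2]
    have e2 : ∑ k ∈ Finset.range (N+1), |((N.choose k : ℝ) * (k:ℝ)) ^ a| ^ (1/a)
        = (N:ℝ) * 2 ^ (N - 1 : ℕ) := by
      rw [← lemAreal N hN]
      refine Finset.sum_congr rfl fun k hk => ?_
      have h0 : (0:ℝ) ≤ (N.choose k : ℝ) * (k:ℝ) := by positivity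
      rw [abs_of_nonneg (Real.rpow_nonneg h0 _), ← Real.rpow_mul h0,
        mul_one_div, div_self ha0.ne', Real.rpow_one]
    have e3 : ∑ k ∈ Finset.range (N+1), |((N.choose k : ℝ) * (k:ℝ)^2) ^ b| ^ (1/b)
        = ((N:ℝ) + (N:ℝ)^2) * 2 ^ (N - 2 : ℕ) := by
      rw [← lemBreal N hN]
      refine Finset.sum_congr rfl fun k hk => ?_
      have h0 : (0:ℝ) ≤ (N.choose k : ℝ) * (k:ℝ)^2 := by positivity
      rw [abs_of_nonneg (Real.rpow_nonneg h0 _), ← Real.rpow_mul h0,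
        mul_one_div, div_self hb0.ne', Real.rpow_one]
    rw [e1, e2, e3] at H
    refine H.trans (le_of_eq ?_)
    rw [hpow1, hpow2,
      Real.mul_rpow hN0.le (Real.rpow_nonneg (by norm_num) _),
      Real.mul_rpow hNN (Real.rpow_nonneg (by norm_num) _)]
    rw [← Real.rpow_mul (by norm_num : (0:ℝ) ≤ 2),
      ← Real.rpow_mul (by norm_num : (0:ℝ) ≤ 2)]
    have : ((N:ℝ) - 1) * a + ((N:ℝ) - 2) * b = (N:ℝ) - s := by
      rw [ha, hb]; ring
    calc (N:ℝ)^a * (2:ℝ)^(((N:ℝ)-1)*a) * (((N:ℝ)+(N:ℝ)^2)^b * (2:ℝ)^(((N:ℝ)-2)*b))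
        = (N:ℝ)^a * ((N:ℝ)+(N:ℝ)^2)^b
          * ((2:ℝ)^(((N:ℝ)-1)*a) * (2:ℝ)^(((N:ℝ)-2)*b)) := by ring
      _ = (N:ℝ)^a * ((N:ℝ)+(N:ℝ)^2)^b * (2:ℝ)^((N:ℝ)-s) := by
          rw [← Real.rpow_add (by norm_num : (0:ℝ) < 2), this]
end

section
/- For reals x, y ≥ 1 with l = ⌊x⌋ ≥ 1, m = ⌊y⌋ ≥ 1, the Beta function satisfies B(x+1, y+1) ≤ (l!·m!·(l+1)^(x−l)·(m+1)^(y−m)) / (l+m)!. -/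
open Real

lemma gamma_upper (t : ℝ) (ht : 1 ≤ t) (n : ℕ) (hn : n = ⌊t⌋₊) :
    Real.Gamma (t + 1) ≤ (Nat.factorial n : ℝ) * ((n : ℝ) + 1) ^ (t - n) := by
  have hnt : (n : ℝ) ≤ t := hn ▸ Nat.floor_le (by linarith)
  have htn : t < n + 1 := by exact_mod_cast hn ▸ Nat.lt_floor_add_one t
  set θ := t - n with hθ
  have hθ0 : 0 ≤ θ := by linarith
  have hθ1 : θ < 1 := by linarith
  rcases eq_or_lt_of_le hθ0 with h0 | h0
  · have ht' : t = n := by linarith [h0.symm ▸ hθ]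
    rw [ht', ← h0, Real.rpow_zero, mul_one, Real.Gamma_nat_eq_factorial]
  · have key := Real.Gamma_mul_add_mul_le_rpow_Gamma_mul_rpow_Gamma
      (s := (n : ℝ) + 1) (t := (n : ℝ) + 2) (a := 1 - θ) (b := θ)
      (by positivity) (by positivity) (by linarith) h0 (by ring)
    have harg : (1 - θ) * ((n : ℝ) + 1) + θ * ((n : ℝ) + 2) = t + 1 := by
      rw [hθ]; ring
    rw [harg] at key
    have h1 : Real.Gamma ((n : ℝ) + 1) = (Nat.factorial n : ℝ) :=
      Real.Gamma_nat_eq_factorial n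
    have h2 : Real.Gamma ((n : ℝ) + 2) = (Nat.factorial (n + 1) : ℝ) := by
      rw [show (n : ℝ) + 2 = ((n + 1 : ℕ) : ℝ) + 1 by push_cast; ring,
        Real.Gamma_nat_eq_factorial]
    rw [h1, h2] at key
    refine key.trans_eq ?_
    have hf : (0 : ℝ) < Nat.factorial n := by positivity
    rw [Nat.factorial_succ]
    push_cast
    rw [Real.mul_rpow (by positivity) (by positivity)]
    have hfe : (Nat.factorial n : ℝ) ^ (1 - θ) * (Nat.factorial n : ℝ) ^ θ
        = (Nat.factorial n : ℝ) := by
      rw [← Real.rpow_add hf]; simp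
    calc (Nat.factorial n : ℝ) ^ (1 - θ) * (((n : ℝ) + 1) ^ θ * (Nat.factorial n : ℝ) ^ θ)
        = ((Nat.factorial n : ℝ) ^ (1 - θ) * (Nat.factorial n : ℝ) ^ θ) * ((n : ℝ) + 1) ^ θ := by
          ring
      _ = (Nat.factorial n : ℝ) * ((n : ℝ) + 1) ^ θ := by rw [hfe]

theorem stmt18 (x y : ℝ) (hx : 1 ≤ x) (hy : 1 ≤ y)
    (l m : ℕ) (hl : l = ⌊x⌋₊) (hm : m = ⌊y⌋₊) :
    Real.Gamma (x + 1) * Real.Gamma (y + 1) / Real.Gamma (x + y + 2)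
      ≤ ((Nat.factorial l : ℝ) * (Nat.factorial m : ℝ) * ((l : ℝ) + 1) ^ (x - l) * ((m : ℝ) + 1) ^ (y - m))
          / (Nat.factorial (l + m) : ℝ) := by
  have hlx : (l : ℝ) ≤ x := hl ▸ Nat.floor_le (by linarith)
  have hmy : (m : ℝ) ≤ y := hm ▸ Nat.floor_le (by linarith)
  have hl1 : 1 ≤ l := hl ▸ Nat.one_le_floor_iff x |>.mpr hx
  have hm1 : 1 ≤ m := hm ▸ Nat.one_le_floor_iff y |>.mpr hy
  have hnum : Real.Gamma (x + 1) * Real.Gamma (y + 1)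
      ≤ (Nat.factorial l : ℝ) * ((l : ℝ) + 1) ^ (x - l)
        * ((Nat.factorial m : ℝ) * ((m : ℝ) + 1) ^ (y - m)) := by
    apply mul_le_mul (gamma_upper x hx l hl) (gamma_upper y hy m hm)
    · exact le_of_lt (Real.Gamma_pos_of_pos (by linarith))
    · positivity
  have hden : (Nat.factorial (l + m) : ℝ) ≤ Real.Gamma (x + y + 2) := by
    have h1 : Real.Gamma (((l + m + 1 : ℕ) : ℝ) + 1) = (Nat.factorial (l + m + 1) : ℝ) :=
      Real.Gamma_nat_eq_factorial (l + m + 1)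
    have h2 : ((l + m + 1 : ℕ) : ℝ) + 1 ≤ x + y + 2 := by push_cast; linarith
    have hmono : Real.Gamma (((l + m + 1 : ℕ) : ℝ) + 1) ≤ Real.Gamma (x + y + 2) := by
      rcases eq_or_lt_of_le h2 with h | h
      · rw [h]
      · exact le_of_lt (Real.Gamma_strictMonoOn_Ici (by simp; push_cast; linarith)
          (by simp; linarith) h)
    calc (Nat.factorial (l + m) : ℝ) ≤ (Nat.factorial (l + m + 1) : ℝ) := by
          exact_mod_cast Nat.factorial_le (by omega)
      _ = Real.Gamma (((l + m + 1 : ℕ) : ℝ) + 1) := h1.symm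
      _ ≤ _ := hmono
  have hG : 0 < Real.Gamma (x + y + 2) := Real.Gamma_pos_of_pos (by linarith)
  have hf : (0 : ℝ) < Nat.factorial (l + m) := by positivity
  refine div_le_div₀ (by positivity) ?_ hf hden
  calc Real.Gamma (x + 1) * Real.Gamma (y + 1)
      ≤ (Nat.factorial l : ℝ) * ((l : ℝ) + 1) ^ (x - l)
        * ((Nat.factorial m : ℝ) * ((m : ℝ) + 1) ^ (y - m)) := hnum
    _ = _ := by ring
end
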